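/- For x sufficiently large and y = x^{1/2}·(log x)^3, the inequality li(x+y) − li(x) < li(y) − 2·x^{1/2}·log x holds, where li(x) = ∫₂^x dt/log t. -/
import Mathlib

open Filter Asymptotics Real

noncomputable def picnt (x : ℝ) : ℕ := Nat.primeCounting ⌊x⌋₊

noncomputable def li (x : ℝ) : ℝ := ∫ t in (2:ℝ)..x, 1 / Real.log t

lemma li_integrable {a b : ℝ} (ha : 2 ≤ a) (hb : 2 ≤ b) :
    IntervalIntegrable (fun t => 1 / Real.log t) MeasureTheory.volume a b := by
  apply ContinuousOn.intervalIntegrable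
  have hsub : Set.uIcc a b ⊆ {(0:ℝ)}ᶜ := by
    intro t ht
    simp only [Set.mem_compl_iff, Set.mem_singleton_iff]
    rcases Set.mem_uIcc.1 ht with h | h <;> intro h0 <;> linarith [h.1]
  refine continuousOn_const.div (Real.continuousOn_log.mono hsub) (fun t ht => ?_)
  have h2 : 2 ≤ t := by rcases Set.mem_uIcc.1 ht with h | h <;> linarith [h.1]
  exact ne_of_gt (Real.log_pos (by linarith))

lemma arith_key (s L : ℝ) (hs0 : 0 < s) (hL10 : 10 ≤ L) :
    s * L ^ 3 * (1 / L) < (s * L ^ 3 - s) * (5 / (3 * L)) - 2 * s * L := by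
  have hLpos : (0:ℝ) < L := by linarith
  have e1 : s * L ^ 3 * (1 / L) = s * L ^ 2 := by
    field_simp
  have e2 : (s * L ^ 3 - s) * (5 / (3 * L)) = (5 / 3) * (s * L ^ 2) - (5 * s) / (3 * L) := by
    field_simp
  have e3 : (5 * s) / (3 * L) ≤ s / 6 := by
    rw [div_le_div_iff₀ (by linarith) (by norm_num)]; nlinarith
  rw [e1, e2]
  nlinarith [mul_pos hs0 (mul_pos hLpos hLpos), mul_pos hs0 hLpos, sq_nonneg (L - 10),
    mul_pos hs0 (show (0:ℝ) < (L - 10) * L + 100 by nlinarith)]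

theorem stmt8 :
    ∀ᶠ x : ℝ in atTop,
      li (x + x ^ ((1:ℝ)/2) * Real.log x ^ 3) - li x <
        li (x ^ ((1:ℝ)/2) * Real.log x ^ 3) - 2 * x ^ ((1:ℝ)/2) * Real.log x := by
  have h1 : ∀ᶠ x : ℝ in atTop, Real.exp 10 ≤ x := eventually_ge_atTop _
  have h2 : ∀ᶠ x : ℝ in atTop, ‖Real.log (Real.log x)‖ ≤ (1/30) * ‖Real.log x‖ :=
    Real.tendsto_log_atTop.eventually (Real.isLittleO_log_id_atTop.bound (by norm_num))
  filter_upwards [h1, h2] with x hx hlx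
  set L := Real.log x with hL
  set s := x ^ ((1:ℝ)/2) with hs
  set y := s * L ^ 3 with hy
  have hx0 : (0:ℝ) < x := lt_of_lt_of_le (Real.exp_pos 10) hx
  have hL10 : 10 ≤ L := by
    rw [hL, show (10:ℝ) = Real.log (Real.exp 10) by rw [Real.log_exp]]
    exact Real.log_le_log (Real.exp_pos 10) hx
  have hLpos : (0:ℝ) < L := by linarith
  have hs0 : 0 < s := Real.rpow_pos_of_pos hx0 _
  have h4 : (4:ℝ) ≤ x := by have := Real.add_one_le_exp (10:ℝ); linarith
  have hs2 : (2:ℝ) ≤ s := by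
    calc (2:ℝ) = 4 ^ ((1:ℝ)/2) := by
          rw [show (4:ℝ) = 2 ^ (2:ℕ) by norm_num, ← Real.rpow_natCast 2 2,
            ← Real.rpow_mul (by norm_num)]
          norm_num
      _ ≤ s := Real.rpow_le_rpow (by norm_num) h4 (by norm_num)
  have hLcube : (1:ℝ) ≤ L ^ 3 := by nlinarith [sq_nonneg (L - 10), sq_nonneg L]
  have hsy : s ≤ y := by nlinarith
  have hy0 : (0:ℝ) < y := by positivity
  have hy2 : (2:ℝ) ≤ y := le_trans hs2 hsy
  have hx2 : (2:ℝ) ≤ x := by linarith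
  have hxy2 : (2:ℝ) ≤ x + y := by linarith
  -- log y
  have hlogL : Real.log L ≤ L / 30 := by
    rw [Real.norm_eq_abs, Real.norm_eq_abs] at hlx
    have h1 := le_trans (le_abs_self (Real.log L)) hlx
    rw [abs_of_pos hLpos] at h1
    linarith
  have hlogL0 : (0:ℝ) ≤ Real.log L := Real.log_nonneg (by linarith)
  have hlogy : Real.log y = (1/2) * L + 3 * Real.log L := by
    rw [hy, Real.log_mul (ne_of_gt hs0) (by positivity), hs, Real.log_rpow hx0,
      Real.log_pow]
    push_cast
    ring
  have hly_pos : 0 < Real.log y := by rw [hlogy]; linarith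
  have hly_le : Real.log y ≤ (3/5) * L := by rw [hlogy]; linarith
  -- upper bound for li (x+y) - li x
  have hsplit : li (x + y) - li x = ∫ t in x..(x+y), 1 / Real.log t := by
    rw [li, li, ← intervalIntegral.integral_add_adjacent_intervals
      (li_integrable le_rfl hx2) (li_integrable hx2 hxy2)]
    ring
  have hupper : (∫ t in x..(x+y), 1 / Real.log t) ≤ y * (1 / L) := by
    have hmono := intervalIntegral.integral_mono_on (by linarith : x ≤ x + y)
      (li_integrable hx2 hxy2) intervalIntegrable_const
      (fun t ht => by
        have hlt : L ≤ Real.log t := Real.log_le_log hx0 ht.1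
        exact one_div_le_one_div_of_le hLpos hlt)
    calc (∫ t in x..(x+y), 1 / Real.log t) ≤ ∫ _t in x..(x+y), 1 / L := hmono
      _ = y * (1 / L) := by rw [intervalIntegral.integral_const, smul_eq_mul]; ring
  -- lower bound for li y
  have hnn : 0 ≤ ∫ t in (2:ℝ)..s, 1 / Real.log t := by
    apply intervalIntegral.integral_nonneg hs2
    intro u hu
    have : 0 < Real.log u := Real.log_pos (by linarith [hu.1])
    positivity
  have hsplit2 : li y = (∫ t in (2:ℝ)..s, 1 / Real.log t) + ∫ t in s..y, 1 / Real.log t := by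
    rw [li, ← intervalIntegral.integral_add_adjacent_intervals
      (li_integrable le_rfl hs2) (li_integrable hs2 hy2)]
  have hlower2 : (y - s) * (1 / Real.log y) ≤ ∫ t in s..y, 1 / Real.log t := by
    have hmono := intervalIntegral.integral_mono_on hsy
      intervalIntegrable_const (li_integrable hs2 hy2)
      (fun t ht => by
        have ht2 : (2:ℝ) ≤ t := le_trans hs2 ht.1
        have hlt0 : 0 < Real.log t := Real.log_pos (by linarith)
        have hlt : Real.log t ≤ Real.log y := Real.log_le_log (by linarith) ht.2
        exact one_div_le_one_div_of_le hlt0 hlt)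
    calc (y - s) * (1 / Real.log y) = ∫ _t in s..y, 1 / Real.log y := by
          rw [intervalIntegral.integral_const, smul_eq_mul]
      _ ≤ ∫ t in s..y, 1 / Real.log t := hmono
  have hfrac : 5 / (3 * L) ≤ 1 / Real.log y := by
    rw [div_le_div_iff₀ (by linarith) hly_pos]
    linarith
  have key : y * (1 / L) < (y - s) * (5 / (3 * L)) - 2 * s * L := by
    rw [hy]
    exact arith_key s L hs0 hL10
  have hstep : (y - s) * (5 / (3 * L)) ≤ (y - s) * (1 / Real.log y) :=
    mul_le_mul_of_nonneg_left hfrac (by linarith)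
  have final : li (x + y) - li x < li y - 2 * s * L := by
    rw [hsplit, hsplit2]
    have := hlower2
    linarith [hnn, hupper, key, hstep, hlower2]
  calc li (x + y) - li x < li y - 2 * s * L := final
    _ = li y - 2 * s * L := rfl
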